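/- arXiv:cs/0703036 — 6 statements merged into one kernel-verified Lean document; each statement's English description precedes it below -/
import Mathlib

section
/- Let ρ : G → Uₙ(ℂ) be a unitary representation of a finite group G, H ≤ G a subgroup, and W ⊆ ℂⁿ a subspace whose stabilizer in G is H. Then for g₀, g ∈ G with g ∈ H g₀ H ∪ H g₀⁻¹ H, the pair of subspaces (W, ρ(g)W) has the same set of principal angles as (W, ρ(g₀)W). In particular, the number of distinct sets of principal angles occurring between pairs of distinct elements of the orbit {ρ(g)W : g ∈ G} is at most the number of orbits of G acting on unordered pairs of distinct elements of G/H. -/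
open scoped Matrix

/-- Orthogonal projection onto a subspace, as an endomorphism. -/
noncomputable def proj {n : ℕ} (W : Submodule ℂ (EuclideanSpace ℂ (Fin n))) :
    EuclideanSpace ℂ (Fin n) →ₗ[ℂ] EuclideanSpace ℂ (Fin n) :=
  W.subtype ∘ₗ (W.orthogonalProjection).toLinearMap

/-- Squared chordal distance between two subspaces:
`Trace(Π_P) - Trace(Π_P Π_Q)`. -/
noncomputable def dc2 {n : ℕ} (P Q : Submodule ℂ (EuclideanSpace ℂ (Fin n))) : ℝ :=
  (LinearMap.trace ℂ _ (proj P) - LinearMap.trace ℂ _ (proj P ∘ₗ proj Q)).re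

/-- The action of a group element on `ℂⁿ` through a unitary representation. -/
noncomputable def act {n : ℕ} {G : Type*} [Group G]
    (ρ : G →* Matrix.unitaryGroup (Fin n) ℂ) (g : G) :
    EuclideanSpace ℂ (Fin n) →ₗ[ℂ] EuclideanSpace ℂ (Fin n) :=
  Matrix.toEuclideanLin (ρ g : Matrix (Fin n) (Fin n) ℂ)

/-- Irreducibility of a unitary matrix representation. -/
def IsIrred {n : ℕ} {G : Type*} [Group G] (ρ : G →* Matrix.unitaryGroup (Fin n) ℂ) : Prop :=
  ∀ U : Submodule ℂ (EuclideanSpace ℂ (Fin n)), (∀ g : G, U.map (act ρ g) ≤ U) → U = ⊥ ∨ U = ⊤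

/-- The character of a unitary matrix representation. -/
noncomputable def charOf {n : ℕ} {G : Type*} [Group G]
    (ρ : G →* Matrix.unitaryGroup (Fin n) ℂ) (g : G) : ℂ :=
  (ρ g : Matrix (Fin n) (Fin n) ℂ).trace

/-- `χ` is the character of some irreducible unitary representation of `G`. -/
def IsIrredChar {G : Type*} [Group G] (χ : G → ℂ) : Prop :=
  ∃ (d : ℕ) (σ : G →* Matrix.unitaryGroup (Fin d) ℂ), IsIrred σ ∧ ∀ g, χ g = charOf σ g

/-- Two pairs of subspaces have the same set of principal angles iff they are in the same
orbit of the unitary group. -/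
def samePA {n : ℕ} (P Q P' Q' : Submodule ℂ (EuclideanSpace ℂ (Fin n))) : Prop :=
  ∃ U : EuclideanSpace ℂ (Fin n) ≃ₗᵢ[ℂ] EuclideanSpace ℂ (Fin n),
    P.map U.toLinearEquiv.toLinearMap = P' ∧ Q.map U.toLinearEquiv.toLinearMap = Q'

/-- The isotypic subspace of a unitary representation `ρ` of `H` associated to a character
`χ` : the sum of all `H`-invariant subspaces on which the representation has character `χ`. -/
noncomputable def isotypic {n : ℕ} {H : Type*} [Group H]
    (ρ : H →* Matrix.unitaryGroup (Fin n) ℂ) (χ : H → ℂ) :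
    Submodule ℂ (EuclideanSpace ℂ (Fin n)) :=
  sSup {U : Submodule ℂ (EuclideanSpace ℂ (Fin n)) |
    ∃ hU : ∀ (h : H), ∀ x ∈ U, act ρ h x ∈ U,
      ∀ h : H, LinearMap.trace ℂ U ((act ρ h).restrict (hU h)) = χ h}

/-- Squared chordal distance in terms of projection matrices. -/
noncomputable def dc2M {ι : Type*} [Fintype ι] (P Q : Matrix ι ι ℂ) : ℝ :=
  (P.trace - (P * Q).trace).re

/-!
As every `ρ g` is unitary and `H` fixes `W`, the pair `(ρ x W, ρ y W)` only depends on the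
cosets `(x H, y H)`, and translating both cosets by the same `g` does not change its principal
angles. What remains is the symmetry
of principal angles: subspaces `P, Q` of equal dimension can be swapped by a unitary. Choose
orthonormal bases `pᵢ` of `P` and `qᵢ` of `Q` in which the compression `P → Q` of the orthogonal
projection is diagonal (a singular value decomposition). Then `⟪pᵢ, qⱼ⟫` is a real diagonal
matrix, so every `pᵢ - qᵢ` is orthogonal to every `pⱼ + qⱼ`, and the reflection in
`span {pⱼ + qⱼ}` exchanges each `pᵢ` with `qᵢ`.
-/

open Module Set
open scoped InnerProductSpace

section LinearAlgebra

variable {𝕜 E F : Type*} [RCLike 𝕜] [NormedAddCommGroup E] [InnerProductSpace 𝕜 E]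
  [NormedAddCommGroup F] [InnerProductSpace 𝕜 F]

theorem Submodule.reflection_span_range_add_apply [FiniteDimensional 𝕜 E] {ι : Type*}
    {p q : ι → E} (hpp : ∀ i j, ⟪p i, p j⟫_𝕜 = ⟪q i, q j⟫_𝕜)
    (hpq : ∀ i j, ⟪p i, q j⟫_𝕜 = ⟪q i, p j⟫_𝕜) (i : ι) :
    (span 𝕜 (range (p + q))).reflection (p i) = q i := by
  set K := span 𝕜 (range (p + q))
  have h_add : p i + q i ∈ K := subset_span ⟨i, rfl⟩
  have h_sub : p i - q i ∈ Kᗮ := by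
    rw [mem_orthogonal]
    intro u hu
    induction hu using span_induction with
    | mem _ hx =>
      obtain ⟨j, rfl⟩ := hx
      simp only [Pi.add_apply, inner_add_left, inner_sub_right, hpp, hpq]
      ring
    | zero => exact inner_zero_left _
    | add x y _ _ hx hy => rw [inner_add_left, hx, hy, add_zero]
    | smul a x _ hx => rw [inner_smul_left, hx, mul_zero]
  have hsplit : p i = (2⁻¹ : 𝕜) • (p i + q i) + (2⁻¹ : 𝕜) • (p i - q i) := by module
  rw [hsplit, map_add, map_smul, map_smul, reflection_mem_subspace_eq_self h_add,
    reflection_mem_subspace_orthogonalComplement_eq_neg h_sub]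
  module

theorem OrthonormalBasis.span_range_coe {ι : Type*} [Fintype ι] {P : Submodule 𝕜 E}
    (b : OrthonormalBasis ι 𝕜 P) : Submodule.span 𝕜 (range fun i => (b i : E)) = P := by
  rw [range_comp' Subtype.val b, ← Submodule.coe_subtype, ← Submodule.map_span, ← b.coe_toBasis,
    b.toBasis.span_eq, Submodule.map_top, Submodule.range_subtype]

theorem LinearMap.inner_apply_eigenvectorBasis_adjoint_comp_self_of_ne [FiniteDimensional 𝕜 E]
    [FiniteDimensional 𝕜 F] (A : E →ₗ[𝕜] F) {m : ℕ} (hE : finrank 𝕜 E = m) {i j : Fin m}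
    (hij : i ≠ j) :
    ⟪A ((isSymmetric_adjoint_comp_self A).eigenvectorBasis hE i),
      A ((isSymmetric_adjoint_comp_self A).eigenvectorBasis hE j)⟫_𝕜 = 0 := by
  rw [← adjoint_inner_right, ← comp_apply, IsSymmetric.apply_eigenvectorBasis, inner_smul_right,
    orthonormal_iff_ite.mp (OrthonormalBasis.orthonormal _), if_neg hij, mul_zero]

theorem LinearMap.exists_orthonormalBasis_apply_eq_smul [FiniteDimensional 𝕜 E]
    [FiniteDimensional 𝕜 F] (A : E →ₗ[𝕜] F) {m : ℕ} (hE : finrank 𝕜 E = m)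
    (hF : finrank 𝕜 F = m) :
    ∃ (b : OrthonormalBasis (Fin m) 𝕜 E) (c : OrthonormalBasis (Fin m) 𝕜 F) (σ : Fin m → ℝ),
      ∀ i, A (b i) = (σ i : 𝕜) • c i := by
  set b := (isSymmetric_adjoint_comp_self A).eigenvectorBasis hE
  set σ : Fin m → ℝ := fun i => ‖A (b i)‖
  set v : Fin m → F := fun i => ((σ i)⁻¹ : 𝕜) • A (b i)
  have hv : Orthonormal 𝕜 ({i | A (b i) ≠ 0}.domRestrict v) := by
    rw [orthonormal_iff_ite]
    rintro ⟨i, hi⟩ ⟨j, hj⟩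
    change ⟪v i, v j⟫_𝕜 = _
    simp only [v, inner_smul_left, inner_smul_right, Subtype.mk.injEq]
    split_ifs with hij
    · subst hij
      have : (‖A (b i)‖ : 𝕜) ≠ 0 := by simpa using hi
      simp only [σ, inner_self_eq_norm_sq_to_K, map_inv₀, RCLike.conj_ofReal]
      field_simp
    · rw [A.inner_apply_eigenvectorBasis_adjoint_comp_self_of_ne hE hij, mul_zero, mul_zero]
  obtain ⟨c, hc⟩ := hv.exists_orthonormalBasis_extension_of_card_eq (by simpa using hF)
  refine ⟨b, c, σ, fun i => ?_⟩
  by_cases hi : A (b i) = 0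
  · simp [σ, hi]
  · rw [hc i hi, smul_smul, mul_inv_cancel₀ (by simpa [σ] using hi), one_smul]

theorem Submodule.exists_linearIsometryEquiv_map_swap [FiniteDimensional 𝕜 E]
    {P Q : Submodule 𝕜 E} (h : finrank 𝕜 P = finrank 𝕜 Q) :
    ∃ U : E ≃ₗᵢ[𝕜] E, P.map U.toLinearEquiv.toLinearMap = Q ∧
      Q.map U.toLinearEquiv.toLinearMap = P := by
  obtain ⟨b, c, σ, hbc⟩ := (Q.orthogonalProjectionOnto.toLinearMap ∘ₗ P.subtype)
    |>.exists_orthonormalBasis_apply_eq_smul rfl h.symm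
  set p : Fin (finrank 𝕜 P) → E := fun i => b i
  set q : Fin (finrank 𝕜 P) → E := fun i => c i
  have hcross : ∀ i j, ⟪p i, q j⟫_𝕜 = if i = j then (σ i : 𝕜) else 0 := by
    intro i j
    rw [← inner_orthogonalProjectionOnto_eq_of_mem_right, show Q.orthogonalProjectionOnto (p i)
      = (σ i : 𝕜) • c i from hbc i, inner_smul_left, orthonormal_iff_ite.mp c.orthonormal,
      RCLike.conj_ofReal, mul_ite, mul_one, mul_zero]
  have hpp : ∀ i j, ⟪p i, p j⟫_𝕜 = ⟪q i, q j⟫_𝕜 := fun i j => by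
    simp only [p, q, ← coe_inner, orthonormal_iff_ite.mp b.orthonormal,
      orthonormal_iff_ite.mp c.orthonormal]
  have hpq : ∀ i j, ⟪p i, q j⟫_𝕜 = ⟪q i, p j⟫_𝕜 := fun i j => by
    rw [hcross, ← inner_conj_symm, hcross]
    split_ifs with hij hji hji
    · rw [hij, RCLike.conj_ofReal]
    · exact absurd hij.symm hji
    · exact absurd hji.symm hij
    · rw [map_zero]
  set U := (span 𝕜 (range (p + q))).reflection
  have hU : ∀ i, U (p i) = q i := reflection_span_range_add_apply hpp hpq
  have hU' : ∀ i, U (q i) = p i := fun i => by rw [← hU, reflection_reflection]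
  refine ⟨U, ?_, ?_⟩
  · rw [← b.span_range_coe, ← c.span_range_coe, map_span, ← range_comp]
    exact congrArg _ (congrArg range (funext hU))
  · rw [← b.span_range_coe, ← c.span_range_coe, map_span, ← range_comp]
    exact congrArg _ (congrArg range (funext hU'))

end LinearAlgebra

section PrincipalAngles

variable {n : ℕ} {P Q P' Q' P'' Q'' : Submodule ℂ (EuclideanSpace ℂ (Fin n))}

theorem samePA_refl (P Q : Submodule ℂ (EuclideanSpace ℂ (Fin n))) : samePA P Q P Q :=
  ⟨LinearIsometryEquiv.refl ℂ _, Submodule.map_id P, Submodule.map_id Q⟩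

theorem samePA.symm (h : samePA P Q P' Q') : samePA P' Q' P Q := by
  obtain ⟨U, hP, hQ⟩ := h
  exact ⟨U.symm, (Submodule.map_symm_eq_iff _).2 hP, (Submodule.map_symm_eq_iff _).2 hQ⟩

theorem samePA.trans (h : samePA P Q P' Q') (h' : samePA P' Q' P'' Q'') :
    samePA P Q P'' Q'' := by
  obtain ⟨U, hP, hQ⟩ := h
  obtain ⟨U', hP', hQ'⟩ := h'
  refine ⟨U.trans U', ?_, ?_⟩
  · rw [← hP', ← hP, ← Submodule.map_comp]; rfl
  · rw [← hQ', ← hQ, ← Submodule.map_comp]; rfl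

theorem samePA_equivalence :
    Equivalence fun x y : Submodule ℂ (EuclideanSpace ℂ (Fin n)) × _ => samePA x.1 x.2 y.1 y.2 :=
  ⟨fun x => samePA_refl x.1 x.2, samePA.symm, samePA.trans⟩

theorem samePA_swap (h : finrank ℂ P = finrank ℂ Q) : samePA P Q Q P :=
  Submodule.exists_linearIsometryEquiv_map_swap h

end PrincipalAngles

def SameUnorderedOrbit (G : Type*) {X : Type*} [SMul G X] (p q : X × X) : Prop :=
  ∃ g : G, (g • p.1, g • p.2) = q ∨ (g • p.1, g • p.2) = (q.2, q.1)

theorem sameUnorderedOrbit_mk_one_of_mem_doubleCoset {G : Type*} [Group G] {H : Subgroup G}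
    {g₀ g : G}
    (hg : (∃ a ∈ H, ∃ b ∈ H, g = a * g₀ * b) ∨ (∃ a ∈ H, ∃ b ∈ H, g = a * g₀⁻¹ * b)) :
    SameUnorderedOrbit G (((1 : G) : G ⧸ H), (g : G ⧸ H)) ((1 : G), (g₀ : G ⧸ H)) := by
  rcases hg with ⟨a, ha, b, hb, rfl⟩ | ⟨a, ha, b, hb, rfl⟩
  · refine ⟨a⁻¹, Or.inl ?_⟩
    simp only [MulAction.Quotient.smul_coe, smul_eq_mul, Prod.mk.injEq]
    constructor
    · rw [mul_one, ← one_mul a⁻¹, QuotientGroup.mk_mul_of_mem 1 (inv_mem ha)]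
    · rw [show a⁻¹ * (a * g₀ * b) = g₀ * b by group, QuotientGroup.mk_mul_of_mem g₀ hb]
  · refine ⟨g₀ * a⁻¹, Or.inr ?_⟩
    simp only [MulAction.Quotient.smul_coe, smul_eq_mul, Prod.mk.injEq]
    constructor
    · rw [mul_one, QuotientGroup.mk_mul_of_mem g₀ (inv_mem ha)]
    · rw [show g₀ * a⁻¹ * (a * g₀⁻¹ * b) = 1 * b by group, QuotientGroup.mk_mul_of_mem 1 hb]

section Orbit

variable {G : Type*} [Group G] {n : ℕ} (ρ : G →* Matrix.unitaryGroup (Fin n) ℂ)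

noncomputable def actIsometry (g : G) :
    EuclideanSpace ℂ (Fin n) ≃ₗᵢ[ℂ] EuclideanSpace ℂ (Fin n) :=
  Unitary.linearIsometryEquiv ⟨Matrix.toEuclideanCLM (𝕜 := ℂ) (n := Fin n) (ρ g),
    Unitary.map_mem (Matrix.toEuclideanCLM (𝕜 := ℂ) (n := Fin n)) (ρ g).2⟩

theorem act_mul (g h : G) : act ρ (g * h) = act ρ g ∘ₗ act ρ h := by
  simp only [act, map_mul, Matrix.UnitaryGroup.mul_val,
    ← Matrix.coe_toEuclideanCLM_eq_toEuclideanLin]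
  rfl

theorem map_act_map_act (P : Submodule ℂ (EuclideanSpace ℂ (Fin n))) (g h : G) :
    (P.map (act ρ h)).map (act ρ g) = P.map (act ρ (g * h)) := by
  rw [act_mul, Submodule.map_comp]

theorem finrank_map_act (P : Submodule ℂ (EuclideanSpace ℂ (Fin n))) (g : G) :
    finrank ℂ (P.map (act ρ g)) = finrank ℂ P :=
  (actIsometry ρ g).toLinearEquiv.finrank_map_eq P

variable {H : Subgroup G} (W : Submodule ℂ (EuclideanSpace ℂ (Fin n)))

noncomputable def orbitSubspace (x : G ⧸ H) : Submodule ℂ (EuclideanSpace ℂ (Fin n)) :=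
  W.map (act ρ x.out)

variable {ρ W}

theorem orbitSubspace_mk (hH : ∀ h ∈ H, W.map (act ρ h) = W) (g : G) :
    orbitSubspace ρ W (g : G ⧸ H) = W.map (act ρ g) := by
  obtain ⟨h, hg⟩ := QuotientGroup.mk_out_eq_mul H g
  rw [orbitSubspace, hg, ← map_act_map_act, hH h h.2]

theorem orbitSubspace_smul (hH : ∀ h ∈ H, W.map (act ρ h) = W) (g : G) (x : G ⧸ H) :
    orbitSubspace ρ W (g • x) = (orbitSubspace ρ W x).map (act ρ g) := by
  induction x using QuotientGroup.induction_on with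
  | H y =>
    rw [MulAction.Quotient.smul_coe, orbitSubspace_mk hH, orbitSubspace_mk hH, smul_eq_mul,
      map_act_map_act]

theorem samePA_orbitSubspace_of_sameUnorderedOrbit (hH : ∀ h ∈ H, W.map (act ρ h) = W)
    {p q : (G ⧸ H) × (G ⧸ H)} (hpq : SameUnorderedOrbit G p q) :
    samePA (orbitSubspace ρ W p.1) (orbitSubspace ρ W p.2)
      (orbitSubspace ρ W q.1) (orbitSubspace ρ W q.2) := by
  obtain ⟨g, hg⟩ := hpq
  have hmove : samePA (orbitSubspace ρ W p.1) (orbitSubspace ρ W p.2)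
      (orbitSubspace ρ W (g • p.1)) (orbitSubspace ρ W (g • p.2)) := by
    rw [orbitSubspace_smul hH, orbitSubspace_smul hH]
    exact ⟨actIsometry ρ g, rfl, rfl⟩
  rcases hg with rfl | hg
  · exact hmove
  · simp only [Prod.mk.injEq] at hg
    rw [← hg.1, ← hg.2]
    refine hmove.trans (samePA_swap ?_)
    rw [orbitSubspace, orbitSubspace, finrank_map_act, finrank_map_act]

theorem samePA_orbitSubspace_of_eqvGen (hH : ∀ h ∈ H, W.map (act ρ h) = W) {ι : Type*}
    {f : ι → (G ⧸ H) × (G ⧸ H)} {a b : ι}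
    (hab : Relation.EqvGen (fun a b => SameUnorderedOrbit G (f a) (f b)) a b) :
    samePA (orbitSubspace ρ W (f a).1) (orbitSubspace ρ W (f a).2)
      (orbitSubspace ρ W (f b).1) (orbitSubspace ρ W (f b).2) :=
  ((samePA_equivalence.comap fun i =>
    (orbitSubspace ρ W (f i).1, orbitSubspace ρ W (f i).2)).eqvGen_iff).1
    (hab.mono fun _ _ => samePA_orbitSubspace_of_sameUnorderedOrbit hH)

end Orbit

theorem stmt3_general {G : Type*} [Group G] {n : ℕ}
    (ρ : G →* Matrix.unitaryGroup (Fin n) ℂ) (H : Subgroup G)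
    (W : Submodule ℂ (EuclideanSpace ℂ (Fin n)))
    (hstab : ∀ g : G, W.map (act ρ g) = W ↔ g ∈ H) :
    (∀ g₀ g : G,
      ((∃ a ∈ H, ∃ b ∈ H, g = a * g₀ * b) ∨ (∃ a ∈ H, ∃ b ∈ H, g = a * g₀⁻¹ * b)) →
        samePA W (W.map (act ρ g)) W (W.map (act ρ g₀))) ∧
    (∃ R : Set (G × G),
      Nat.card R ≤
        Nat.card (Quot (fun p q : {p : (G ⧸ H) × (G ⧸ H) // p.1 ≠ p.2} =>
          ∃ g : G, (g • p.val.1, g • p.val.2) = q.val ∨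
            (g • p.val.1, g • p.val.2) = (q.val.2, q.val.1))) ∧
      ∀ g₁ g₂ : G, W.map (act ρ g₁) ≠ W.map (act ρ g₂) →
        ∃ r ∈ R, samePA (W.map (act ρ g₁)) (W.map (act ρ g₂))
          (W.map (act ρ r.1)) (W.map (act ρ r.2))) := by
  have hH : ∀ h ∈ H, W.map (act ρ h) = W := fun h hh => (hstab h).2 hh
  have hW : orbitSubspace ρ W ((1 : G) : G ⧸ H) = W := by
    rw [orbitSubspace_mk hH, hH 1 H.one_mem]
  refine ⟨fun g₀ g hg => ?_, ?_⟩
  · have := samePA_orbitSubspace_of_sameUnorderedOrbit hH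
      (sameUnorderedOrbit_mk_one_of_mem_doubleCoset hg)
    rwa [hW, orbitSubspace_mk hH, orbitSubspace_mk hH] at this
  set F : Quot (fun p q : {p : (G ⧸ H) × (G ⧸ H) // p.1 ≠ p.2} =>
      SameUnorderedOrbit G p.val q.val) → G × G :=
    fun t => (t.out.val.1.out, t.out.val.2.out)
  have hF : Function.Injective F := fun t t' h => by
    simp only [F, Prod.mk.injEq] at h
    rw [← Quot.out_eq t, ← Quot.out_eq t', Subtype.ext (Prod.ext (Quotient.out_injective h.1)
      (Quotient.out_injective h.2))]
  refine ⟨range F, (Nat.card_range_of_injective hF).le, fun g₁ g₂ hne => ?_⟩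
  have hne' : (g₁ : G ⧸ H) ≠ g₂ := fun h => hne <| by
    rw [← orbitSubspace_mk hH, h, orbitSubspace_mk hH]
  set t := Quot.mk _ (⟨(g₁, g₂), hne'⟩ : {p : (G ⧸ H) × (G ⧸ H) // p.1 ≠ p.2})
  refine ⟨F t, mem_range_self t, ?_⟩
  have := samePA_orbitSubspace_of_eqvGen hH (Quot.eqvGen_exact (Quot.out_eq t).symm)
  rwa [orbitSubspace_mk hH, orbitSubspace_mk hH] at this

/-- if `H` is the stabilizer of `W` in `G`, then for
`g ∈ H g₀ H ∪ H g₀⁻¹ H` the pairs `(W, ρ(g)W)` and `(W, ρ(g₀)W)` have the same set of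
principal angles; and the number of distinct sets of principal angles between pairs of
distinct elements of the orbit of `W` is at most the number of orbits of `G` on unordered
pairs of distinct elements of `G/H`. -/
theorem stmt3 {G : Type*} [Group G] [Fintype G] {n : ℕ}
    (ρ : G →* Matrix.unitaryGroup (Fin n) ℂ) (H : Subgroup G)
    (W : Submodule ℂ (EuclideanSpace ℂ (Fin n)))
    (hstab : ∀ g : G, W.map (act ρ g) = W ↔ g ∈ H) :
    (∀ g₀ g : G,
      ((∃ a ∈ H, ∃ b ∈ H, g = a * g₀ * b) ∨ (∃ a ∈ H, ∃ b ∈ H, g = a * g₀⁻¹ * b)) →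
        samePA W (W.map (act ρ g)) W (W.map (act ρ g₀))) ∧
    (∃ R : Set (G × G),
      Nat.card R ≤
        Nat.card (Quot (fun p q : {p : (G ⧸ H) × (G ⧸ H) // p.1 ≠ p.2} =>
          ∃ g : G, (g • p.val.1, g • p.val.2) = q.val ∨
            (g • p.val.1, g • p.val.2) = (q.val.2, q.val.1))) ∧
      ∀ g₁ g₂ : G, W.map (act ρ g₁) ≠ W.map (act ρ g₂) →
        ∃ r ∈ R, samePA (W.map (act ρ g₁)) (W.map (act ρ g₂))
          (W.map (act ρ r.1)) (W.map (act ρ r.2))) :=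
  stmt3_general ρ H W hstab
end

section
/- If G acts 2-transitively by left multiplication on G/H (equivalently |H\G/H| = 2), then in the orbit code {ρ(g)W : g ∈ G} there is exactly one set of principal angles between distinct elements, i.e. all pairs of distinct subspaces in the orbit have the same set of principal angles. -/
open scoped Matrix

/-!
Since `W` has stabilizer `H`, the orbit `{ρ(g)W}` is in bijection with `G ⧸ H` as a `G`-set, so
2-transitivity on `G ⧸ H` yields a `g` carrying any pair of distinct subspaces of the orbit to any
other. As `ρ(g)` is unitary, it is a linear isometry realising `samePA`.
-/

namespace MulAction

variable {G X : Type*} [Group G] [MulAction G X] {H : Subgroup G} {x : X}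

theorem smul_eq_smul_iff_mk_eq (hstab : ∀ g : G, g • x = x ↔ g ∈ H) {a b : G} :
    a • x = b • x ↔ (a : G ⧸ H) = b := by
  rw [QuotientGroup.eq, ← hstab, mul_smul, inv_smul_eq_iff, eq_comm]

theorem exists_smul_eq_pair_of_quotient_twoTransitive (hstab : ∀ g : G, g • x = x ↔ g ∈ H)
    (h2t : ∀ a b c d : G ⧸ H, a ≠ b → c ≠ d → ∃ g : G, g • a = c ∧ g • b = d)
    {g₁ g₂ g₃ g₄ : G} (h₁₂ : g₁ • x ≠ g₂ • x) (h₃₄ : g₃ • x ≠ g₄ • x) :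
    ∃ g : G, g • g₁ • x = g₃ • x ∧ g • g₂ • x = g₄ • x := by
  rw [Ne, smul_eq_smul_iff_mk_eq hstab] at h₁₂ h₃₄
  obtain ⟨g, h₁, h₂⟩ := h2t _ _ _ _ h₁₂ h₃₄
  refine ⟨g, ?_, ?_⟩ <;> rw [← mul_smul, smul_eq_smul_iff_mk_eq hstab]
  exacts [h₁, h₂]

end MulAction

section UnitaryRepresentation

variable {n : ℕ} {G : Type*} [Group G] (ρ : G →* Matrix.unitaryGroup (Fin n) ℂ)

noncomputable def unitaryRep :
    G →* (EuclideanSpace ℂ (Fin n) ≃ₗᵢ[ℂ] EuclideanSpace ℂ (Fin n)) :=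
  (Unitary.linearIsometryEquiv.toMonoidHom.comp
    (Unitary.map (StarMonoidHom.ofClass
      (Matrix.toEuclideanCLM (n := Fin n) (𝕜 := ℂ)))).toMonoidHom).comp ρ

theorem unitaryRep_toLinearMap (g : G) :
    (unitaryRep ρ g).toLinearEquiv.toLinearMap = act ρ g := rfl

noncomputable abbrev subspaceAction : MulAction G (Submodule ℂ (EuclideanSpace ℂ (Fin n))) where
  smul g P := P.map (act ρ g)
  one_smul P := by
    change P.map (act ρ 1) = P
    rw [← unitaryRep_toLinearMap, map_one]
    exact Submodule.map_id P
  mul_smul g h P := by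
    change P.map (act ρ (g * h)) = (P.map (act ρ h)).map (act ρ g)
    rw [← unitaryRep_toLinearMap, map_mul, ← Submodule.map_comp]
    rfl

end UnitaryRepresentation

theorem stmt4_general {G : Type*} [Group G] {n : ℕ}
    (ρ : G →* Matrix.unitaryGroup (Fin n) ℂ) (H : Subgroup G)
    (W : Submodule ℂ (EuclideanSpace ℂ (Fin n)))
    (hstab : ∀ g : G, W.map (act ρ g) = W ↔ g ∈ H)
    (h2t : ∀ a b c d : G ⧸ H, a ≠ b → c ≠ d → ∃ g : G, g • a = c ∧ g • b = d) :
    ∀ g₁ g₂ g₃ g₄ : G, W.map (act ρ g₁) ≠ W.map (act ρ g₂) →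
      W.map (act ρ g₃) ≠ W.map (act ρ g₄) →
        samePA (W.map (act ρ g₁)) (W.map (act ρ g₂))
          (W.map (act ρ g₃)) (W.map (act ρ g₄)) := by
  let _ := subspaceAction ρ
  intro g₁ g₂ g₃ g₄ h₁₂ h₃₄
  obtain ⟨g, h₁₃, h₂₄⟩ :=
    MulAction.exists_smul_eq_pair_of_quotient_twoTransitive (x := W) hstab h2t h₁₂ h₃₄
  -- `g • P` is `P.map (act ρ g)` by definition, and `act ρ g` underlies `unitaryRep ρ g`.
  exact ⟨unitaryRep ρ g, h₁₃, h₂₄⟩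

/-- if `G` acts 2-transitively on `G/H`, `H` the stabilizer of `W`, then all
pairs of distinct subspaces in the orbit of `W` have the same set of principal angles. -/
theorem stmt4 {G : Type*} [Group G] [Fintype G] {n : ℕ}
    (ρ : G →* Matrix.unitaryGroup (Fin n) ℂ) (H : Subgroup G)
    (W : Submodule ℂ (EuclideanSpace ℂ (Fin n)))
    (hstab : ∀ g : G, W.map (act ρ g) = W ↔ g ∈ H)
    (h2t : ∀ a b c d : G ⧸ H, a ≠ b → c ≠ d → ∃ g : G, g • a = c ∧ g • b = d) :
    ∀ g₁ g₂ g₃ g₄ : G, W.map (act ρ g₁) ≠ W.map (act ρ g₂) →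
      W.map (act ρ g₃) ≠ W.map (act ρ g₄) →
        samePA (W.map (act ρ g₁)) (W.map (act ρ g₂))
          (W.map (act ρ g₃)) (W.map (act ρ g₄)) :=
  stmt4_general ρ H W hstab h2t
end

section
/- In a configuration of N subspaces in G_{m,n} attaining equality in the simplex bound d_c² = (m(n−m)/n)·(N/(N−1)), the chordal distance between every pair of distinct subspaces is the same (the configuration is simplicial). -/
open scoped Matrix

/-!
With `Πₐ` the orthogonal projections, `d_c(Pₐ, P_b)² = m - Tr(Πₐ Π_b)`, so the sum of `d_c²` over
all ordered pairs is `N²m - Tr(S²)` for `S = ∑ₐ Πₐ`. Since `S` is self-adjoint with `Tr S = Nm`,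
Cauchy–Schwarz gives `Tr(S²) ≥ (Tr S)² / n`, so the sum is at most `N²m(n-m)/n`, which is exactly
`N(N-1)` times the simplex bound. If no pair is closer than the bound, every pair attains it.
-/

open Module RCLike Finset

section Trace

variable {𝕜 E : Type*} [RCLike 𝕜] [NormedAddCommGroup E] [InnerProductSpace 𝕜 E]

lemma LinearMap.IsSymmetric.re_trace_comp_self {ι : Type*} [Fintype ι] {T : E →ₗ[𝕜] E}
    (hT : T.IsSymmetric) (b : OrthonormalBasis ι 𝕜 E) :
    re (LinearMap.trace 𝕜 E (T ∘ₗ T)) = ∑ i, ‖T (b i)‖ ^ 2 := by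
  rw [LinearMap.trace_eq_sum_inner _ b, map_sum]
  refine Fintype.sum_congr _ _ fun i => ?_
  rw [LinearMap.comp_apply, ← hT, inner_self_eq_norm_sq]

variable [FiniteDimensional 𝕜 E]

/-- Cauchy–Schwarz on the diagonal entries `⟪bᵢ, T bᵢ⟫` in an orthonormal basis, each bounded
by `‖T bᵢ‖`. -/
lemma LinearMap.IsSymmetric.re_trace_sq_div_finrank_le {T : E →ₗ[𝕜] E} (hT : T.IsSymmetric) :
    re (LinearMap.trace 𝕜 E T) ^ 2 / finrank 𝕜 E ≤ re (LinearMap.trace 𝕜 E (T ∘ₗ T)) := by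
  set b := stdOrthonormalBasis 𝕜 E
  rw [hT.re_trace_comp_self b]
  refine div_le_of_le_mul₀ (Nat.cast_nonneg _) (by positivity) ?_
  have hdiag (i) : re (inner 𝕜 (b i) (T (b i))) ^ 2 ≤ ‖T (b i)‖ ^ 2 := by
    have h := (abs_re_le_norm (inner 𝕜 (b i) (T (b i)))).trans (norm_inner_le_norm (b i) (T (b i)))
    rw [b.orthonormal.1 i, one_mul] at h
    exact sq_le_sq' (abs_le.1 h).1 (abs_le.1 h).2
  calc re (LinearMap.trace 𝕜 E T) ^ 2 = (∑ i, re (inner 𝕜 (b i) (T (b i)))) ^ 2 := by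
        rw [LinearMap.trace_eq_sum_inner _ b, map_sum]
    _ ≤ #univ * ∑ i, re (inner 𝕜 (b i) (T (b i))) ^ 2 := sq_sum_le_card_mul_sum_sq
    _ ≤ (∑ i, ‖T (b i)‖ ^ 2) * finrank 𝕜 E := by
        rw [card_univ, Fintype.card_fin, mul_comm]
        exact mul_le_mul_of_nonneg_right (sum_le_sum fun i _ => hdiag i) (Nat.cast_nonneg _)

lemma Submodule.trace_starProjection (K : Submodule 𝕜 E) :
    LinearMap.trace 𝕜 E K.starProjection = finrank 𝕜 K :=
  LinearMap.IsProj.trace (p := K)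
    ⟨K.starProjection_apply_mem, fun _ hx => K.starProjection_eq_self_iff.2 hx⟩

noncomputable def framePotential {ι : Type*} [Fintype ι] (P : ι → Submodule 𝕜 E) : ℝ :=
  ∑ a, ∑ b, re (LinearMap.trace 𝕜 E
    ((P a).starProjection ∘ₗ ((P b).starProjection : E →ₗ[𝕜] E)))

lemma sq_card_mul_div_finrank_le_framePotential {ι : Type*} [Fintype ι]
    (P : ι → Submodule 𝕜 E) {m : ℕ} (hm : ∀ i, finrank 𝕜 (P i) = m) :
    ((Fintype.card ι : ℝ) * m) ^ 2 / finrank 𝕜 E ≤ framePotential P := by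
  set S : E →ₗ[𝕜] E := ∑ a, (P a).starProjection
  have hS : S.IsSymmetric :=
    LinearMap.isSymmetric_sum _ fun a _ => (P a).starProjection_isSymmetric
  have htrace : re (LinearMap.trace 𝕜 E S) = Fintype.card ι * m := by
    simp [S, map_sum, Submodule.trace_starProjection, hm]
  have hsq : re (LinearMap.trace 𝕜 E (S ∘ₗ S)) = framePotential P := by
    rw [← Module.End.mul_eq_comp, sum_mul_sum]
    simp only [map_sum, Module.End.mul_eq_comp, framePotential]
  simpa only [htrace, hsq] using hS.re_trace_sq_div_finrank_le

end Trace

section Chordal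

variable {n : ℕ}

lemma proj_eq_starProjection (W : Submodule ℂ (EuclideanSpace ℂ (Fin n))) :
    proj W = (W.starProjection : EuclideanSpace ℂ (Fin n) →ₗ[ℂ] EuclideanSpace ℂ (Fin n)) :=
  rfl

lemma dc2_eq (P Q : Submodule ℂ (EuclideanSpace ℂ (Fin n))) :
    dc2 P Q = finrank ℂ P - (LinearMap.trace ℂ _ (proj P ∘ₗ proj Q)).re := by
  rw [dc2, Complex.sub_re, proj_eq_starProjection P, Submodule.trace_starProjection,
    Complex.natCast_re]

lemma dc2_self (P : Submodule ℂ (EuclideanSpace ℂ (Fin n))) : dc2 P P = 0 := by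
  have : proj P ∘ₗ proj P = proj P :=
    congrArg ContinuousLinearMap.toLinearMap P.isIdempotentElem_starProjection
  rw [dc2_eq, this, proj_eq_starProjection, Submodule.trace_starProjection, Complex.natCast_re,
    sub_self]

lemma sum_offDiag_dc2_le {ι : Type*} [Fintype ι] [DecidableEq ι]
    (P : ι → Submodule ℂ (EuclideanSpace ℂ (Fin n))) {m : ℕ} (hm : ∀ i, finrank ℂ (P i) = m) :
    ∑ p ∈ univ.offDiag, dc2 (P p.1) (P p.2) ≤ Fintype.card ι ^ 2 * (m * (n - m) / n) := by
  have hdiag : ∑ p ∈ univ.diag, dc2 (P p.1) (P p.2) = 0 :=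
    sum_eq_zero fun p hp => by rw [(mem_diag.1 hp).2, dc2_self]
  have hall : ∑ a, ∑ b, dc2 (P a) (P b) = Fintype.card ι ^ 2 * m - framePotential P := by
    simp only [dc2_eq, hm, proj_eq_starProjection, sum_sub_distrib, sum_const, card_univ,
      nsmul_eq_mul, framePotential, RCLike.re_to_complex]
    ring
  have hpotential := sq_card_mul_div_finrank_le_framePotential P hm
  rw [finrank_euclideanSpace_fin] at hpotential
  have hsimplex : (Fintype.card ι : ℝ) ^ 2 * m - (Fintype.card ι * m) ^ 2 / n =
      Fintype.card ι ^ 2 * (m * (n - m) / n) := by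
    rcases isEmpty_or_nonempty ι with hι | ⟨⟨i⟩⟩
    · simp
    rcases eq_or_ne n 0 with rfl | hn
    · have hm0 : m = 0 := by simpa [hm i] using Submodule.finrank_le (P i)
      simp [hm0]
    · field_simp
  calc ∑ p ∈ univ.offDiag, dc2 (P p.1) (P p.2) = ∑ a, ∑ b, dc2 (P a) (P b) := by
        rw [← sum_product', ← diag_union_offDiag,
          sum_union (disjoint_diag_offDiag _), hdiag, zero_add]
    _ ≤ Fintype.card ι ^ 2 * (m * (n - m) / n) := by linarith

end Chordal

theorem stmt10_general {n m N : ℕ}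
    (P : Fin N → Submodule ℂ (EuclideanSpace ℂ (Fin n)))
    (hm : ∀ i, Module.finrank ℂ (P i) = m)
    (hbound : ∀ i j, i ≠ j →
      ((m : ℝ) * (n - m) / n) * (N / (N - 1)) ≤ dc2 (P i) (P j)) :
    ∀ i j, i ≠ j → dc2 (P i) (P j) = ((m : ℝ) * (n - m) / n) * (N / (N - 1)) := by
  intro i j hij
  set B : ℝ := ((m : ℝ) * (n - m) / n) * (N / (N - 1))
  have hN : (1 : ℝ) < N := by
    have := Fin.val_ne_of_ne hij
    exact_mod_cast (by omega : 1 < N)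
  have hsumB : ∑ p ∈ (univ : Finset (Fin N)).offDiag, B = (N : ℝ) ^ 2 * (m * (n - m) / n) := by
    rw [sum_const, offDiag_card, nsmul_eq_mul, card_univ, Fintype.card_fin,
      Nat.cast_sub (Nat.le_mul_self N), Nat.cast_mul]
    have hN1 : (N : ℝ) - 1 ≠ 0 := (sub_pos.2 hN).ne'
    have hcard : ((N : ℝ) * N - N) * (N / (N - 1)) = N ^ 2 := by
      field_simp
    linear_combination ((m : ℝ) * (n - m) / n) * hcard
  have hle : ∀ p ∈ univ.offDiag, B ≤ dc2 (P p.1) (P p.2) :=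
    fun p hp => hbound _ _ (mem_offDiag.1 hp).2.2
  have heq : ∑ p ∈ univ.offDiag, B = ∑ p ∈ univ.offDiag, dc2 (P p.1) (P p.2) :=
    (sum_le_sum hle).antisymm (by simpa [hsumB] using sum_offDiag_dc2_le P hm)
  exact ((sum_eq_sum_iff_of_le hle).1 heq (i, j) (by simp [hij])).symm

/-- a configuration of `N` `m`-dimensional subspaces of `ℂⁿ` attaining
equality in the simplex bound is simplicial: every pair of distinct subspaces is at the
same (squared) chordal distance `(m(n−m)/n)·(N/(N−1))`. -/
theorem stmt10 {n m N : ℕ} (hN : 1 < N)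
    (P : Fin N → Submodule ℂ (EuclideanSpace ℂ (Fin n)))
    (hm : ∀ i, Module.finrank ℂ (P i) = m) (hdist : ∀ i j, i ≠ j → P i ≠ P j)
    (hbound : ∀ i j, i ≠ j →
      ((m : ℝ) * (n - m) / n) * (N / (N - 1)) ≤ dc2 (P i) (P j)) :
    ∀ i j, i ≠ j → dc2 (P i) (P j) = ((m : ℝ) * (n - m) / n) * (N / (N - 1)) :=
  stmt10_general P hm hbound
end

section
/- If {Π₁,...,Π_N} are projection matrices of an optimal configuration of N subspaces of dimension m in ℂⁿ reaching the simplex bound d_c² = (m(n−m)/n)·(N/(N−1)), then for any positive integer k the matrices {I_k ⊗ Πᵢ} are projections onto km-dimensional subspaces of ℂ^{kn} forming a configuration of N subspaces whose minimal squared chordal distance is k·d_c², which again attains the simplex bound for parameters (km, kn, N). -/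
open scoped Matrix

/-!
Since `(I ⊗ A)(I ⊗ B) = I ⊗ AB` and `tr (A ⊗ B) = tr A · tr B`, tensoring with `I_k` preserves
Hermitian idempotents and multiplies every trace, hence every squared chordal distance, by `k`.
The simplex bound `m (n - m) / n · N / (N - 1)` is homogeneous of degree one under
`(m, n) ↦ (k m, k n)`, so the scaled configuration still attains it.
-/

open Kronecker

section Kronecker

variable {R ι κ : Type*}

theorem Matrix.IsHermitian.kronecker [CommSemiring R] [StarRing R] {A : Matrix ι ι R}
    {B : Matrix κ κ R} (hA : A.IsHermitian) (hB : B.IsHermitian) : (A ⊗ₖ B).IsHermitian := by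
  rw [Matrix.IsHermitian, Matrix.conjTranspose_kronecker, hA, hB]

theorem IsIdempotentElem.kronecker [Fintype ι] [Fintype κ] [CommSemiring R] {A : Matrix ι ι R}
    {B : Matrix κ κ R} (hA : IsIdempotentElem A) (hB : IsIdempotentElem B) :
    IsIdempotentElem (A ⊗ₖ B) := by
  rw [IsIdempotentElem, ← Matrix.mul_kronecker_mul, hA.eq, hB.eq]

theorem dc2M_one_kronecker [Fintype ι] [Fintype κ] [DecidableEq κ] (P Q : Matrix ι ι ℂ) :
    dc2M ((1 : Matrix κ κ ℂ) ⊗ₖ P) ((1 : Matrix κ κ ℂ) ⊗ₖ Q) = Fintype.card κ * dc2M P Q := by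
  rw [dc2M, dc2M, ← Matrix.mul_kronecker_mul, one_mul, Matrix.trace_kronecker,
    Matrix.trace_kronecker, Matrix.trace_one, ← mul_sub,
    ← Complex.ofReal_natCast, Complex.re_ofReal_mul]

end Kronecker

noncomputable def simplexBound (m n N : ℝ) : ℝ :=
  m * (n - m) / n * (N / (N - 1))

theorem simplexBound_mul_mul (k m n N : ℝ) :
    simplexBound (k * m) (k * n) N = k * simplexBound m n N := by
  rcases eq_or_ne k 0 with rfl | hk
  · simp [simplexBound]
  · have : k * m * (k * n - k * m) = k * (k * (m * (n - m))) := by ring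
    rw [simplexBound, simplexBound, this, mul_div_mul_left _ _ hk, mul_div_assoc, mul_assoc]

open Kronecker in
theorem stmt11_general {n m N k : ℕ}
    (P : Fin N → Matrix (Fin n) (Fin n) ℂ)
    (hherm : ∀ i, (P i).IsHermitian) (hidem : ∀ i, P i * P i = P i)
    (htr : ∀ i, (P i).trace = (m : ℂ))
    (hsimplex : ∀ i j, i ≠ j →
      dc2M (P i) (P j) = ((m : ℝ) * (n - m) / n) * (N / (N - 1))) :
    (∀ i, ((1 : Matrix (Fin k) (Fin k) ℂ) ⊗ₖ P i).IsHermitian) ∧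
    (∀ i, ((1 : Matrix (Fin k) (Fin k) ℂ) ⊗ₖ P i) * ((1 : Matrix (Fin k) (Fin k) ℂ) ⊗ₖ P i)
        = (1 : Matrix (Fin k) (Fin k) ℂ) ⊗ₖ P i) ∧
    (∀ i, ((1 : Matrix (Fin k) (Fin k) ℂ) ⊗ₖ P i).trace = ((k * m : ℕ) : ℂ)) ∧
    (∀ i j, i ≠ j →
      dc2M ((1 : Matrix (Fin k) (Fin k) ℂ) ⊗ₖ P i) ((1 : Matrix (Fin k) (Fin k) ℂ) ⊗ₖ P j)
        = (k : ℝ) * (((m : ℝ) * (n - m) / n) * (N / (N - 1)))) ∧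
    (∀ i j, i ≠ j →
      dc2M ((1 : Matrix (Fin k) (Fin k) ℂ) ⊗ₖ P i) ((1 : Matrix (Fin k) (Fin k) ℂ) ⊗ₖ P j)
        = (((k * m : ℕ) : ℝ) * ((k * n : ℕ) - (k * m : ℕ)) / (k * n : ℕ)) * (N / (N - 1))) := by
  have hdc : ∀ i j, i ≠ j → dc2M ((1 : Matrix (Fin k) (Fin k) ℂ) ⊗ₖ P i)
      ((1 : Matrix (Fin k) (Fin k) ℂ) ⊗ₖ P j) = k * simplexBound m n N := fun i j hij => by
    rw [dc2M_one_kronecker, hsimplex i j hij, Fintype.card_fin, simplexBound]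
  refine ⟨fun i => Matrix.isHermitian_one.kronecker (hherm i),
    fun i => IsIdempotentElem.kronecker .one (hidem i), fun i => ?_, hdc, fun i j hij => ?_⟩
  · rw [Matrix.trace_kronecker, Matrix.trace_one, htr, Fintype.card_fin, Nat.cast_mul]
  · rw [hdc i j hij]
    push_cast
    exact (simplexBound_mul_mul _ _ _ _).symm

open Kronecker in
/-- if `{Πᵢ}` are the projection matrices of a configuration of `N`
`m`-dimensional subspaces of `ℂⁿ` reaching the simplex bound, then for any `k > 0` the
matrices `I_k ⊗ Πᵢ` are projections onto `km`-dimensional subspaces of `ℂ^{kn}` forming a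
configuration whose pairwise squared chordal distance is `k` times the original, again
attaining the simplex bound for the parameters `(km, kn, N)`. -/
theorem stmt11 {n m N k : ℕ} (hN : 1 < N) (hk : 0 < k)
    (P : Fin N → Matrix (Fin n) (Fin n) ℂ)
    (hherm : ∀ i, (P i).IsHermitian) (hidem : ∀ i, P i * P i = P i)
    (htr : ∀ i, (P i).trace = (m : ℂ)) (hdist : ∀ i j, i ≠ j → P i ≠ P j)
    (hsimplex : ∀ i j, i ≠ j →
      dc2M (P i) (P j) = ((m : ℝ) * (n - m) / n) * (N / (N - 1))) :
    (∀ i, ((1 : Matrix (Fin k) (Fin k) ℂ) ⊗ₖ P i).IsHermitian) ∧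
    (∀ i, ((1 : Matrix (Fin k) (Fin k) ℂ) ⊗ₖ P i) * ((1 : Matrix (Fin k) (Fin k) ℂ) ⊗ₖ P i)
        = (1 : Matrix (Fin k) (Fin k) ℂ) ⊗ₖ P i) ∧
    (∀ i, ((1 : Matrix (Fin k) (Fin k) ℂ) ⊗ₖ P i).trace = ((k * m : ℕ) : ℂ)) ∧
    (∀ i j, i ≠ j →
      dc2M ((1 : Matrix (Fin k) (Fin k) ℂ) ⊗ₖ P i) ((1 : Matrix (Fin k) (Fin k) ℂ) ⊗ₖ P j)
        = (k : ℝ) * (((m : ℝ) * (n - m) / n) * (N / (N - 1)))) ∧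
    (∀ i j, i ≠ j →
      dc2M ((1 : Matrix (Fin k) (Fin k) ℂ) ⊗ₖ P i) ((1 : Matrix (Fin k) (Fin k) ℂ) ⊗ₖ P j)
        = (((k * m : ℕ) : ℝ) * ((k * n : ℕ) - (k * m : ℕ)) / (k * n : ℕ)) * (N / (N - 1))) :=
  stmt11_general P hherm hidem htr hsimplex
end

section
/- Let G ≤ Uₙ(ℂ) be a finite group such that the only elements with nonzero trace are ±I. Let 𝒮 be the set of abelian subgroups generated by −I and an order-2 element g ∉ {±I}. For S ∈ 𝒮 and χ a linear character of S with χ(−I) = −1, the isotypic projection (1/|S|)∑_{s∈S} χ(s)·s has rank n/2; the collection of all such isotypic subspaces over all S ∈ 𝒮 and both such characters is a family of 2|𝒮| subspaces of dimension m = n/2 in which the only squared chordal distances between distinct members are m and m/2. -/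
open scoped Matrix

/-!
Each `g ∈ A` is a Hermitian involution, traceless because `g ≠ ±I`, so for `x = ±g` the matrix
`(1 + x)/2` is an orthogonal projection of trace `n/2`. For two of them,
`d_c² = (n - Re tr(xy))/4`, and `xy` is `±` an element of `G`: either it is traceless, giving `n/4`,
or `xy = ±I`; `xy = I` forces `x = y`, and `xy = -I` gives `n/2`. Sending `x` to
`{±I, ±x}` is exactly two-to-one, since the fibre over `{±I, ±g}` is `{g, -g}`.
-/

theorem Nat.card_eq_mul_of_card_fiber_eq {α β : Type*} (f : α → β) {k : ℕ} (hk : k ≠ 0)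
    (h : ∀ b, Nat.card {a // f a = b} = k) : Nat.card α = Nat.card β * k := by
  have e : ∀ b, {a // f a = b} ≃ Fin k := fun b =>
    (Nat.equivFinOfCardPos (by rw [h b]; exact hk)).trans (finCongr (h b))
  calc Nat.card α = Nat.card (Σ b, {a // f a = b}) :=
        Nat.card_congr (Equiv.sigmaFiberEquiv f).symm
    _ = Nat.card (β × Fin k) :=
      Nat.card_congr ((Equiv.sigmaCongrRight e).trans (Equiv.sigmaEquivProd _ _))
    _ = Nat.card β * k := by rw [Nat.card_prod, Nat.card_fin]

section FourGroup

variable {R : Type*} [Ring R]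

def fourGroup (x : R) : Set R := {1, -1, x, -x}

theorem fourGroup_neg (x : R) : fourGroup (-x) = fourGroup x := by
  ext y
  simp only [fourGroup, Set.mem_insert_iff, Set.mem_singleton_iff, neg_neg]
  tauto

theorem fourGroup_eq_fourGroup_iff {x y : R} (hx₁ : x ≠ 1) (hx₂ : x ≠ -1) :
    fourGroup x = fourGroup y ↔ x = y ∨ x = -y := by
  constructor
  · intro h
    have hx : x ∈ fourGroup y := h ▸ (by simp [fourGroup])
    simpa [fourGroup, hx₁, hx₂] using hx
  · rintro (rfl | rfl)
    · rfl
    · exact fourGroup_neg y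

end FourGroup

section ProjOfInvol

variable {ι K : Type*} [DecidableEq ι] [Field K]

def projOfInvol (x : Matrix ι ι K) : Matrix ι ι K := (1 / 2 : K) • (1 + x)

theorem isHermitian_projOfInvol [StarRing K] {x : Matrix ι ι K} (hx : xᴴ = x) :
    (projOfInvol x).IsHermitian := by
  simp [Matrix.IsHermitian, projOfInvol, Matrix.conjTranspose_smul, hx]

theorem projOfInvol_injective [NeZero (2 : K)] :
    Function.Injective (projOfInvol : Matrix ι ι K → Matrix ι ι K) := fun _ _ h =>
  add_left_cancel (smul_right_injective _ (one_div_ne_zero two_ne_zero) h)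

variable [Fintype ι]

theorem projOfInvol_mul_self [NeZero (2 : K)] {x : Matrix ι ι K} (hx : x * x = 1) :
    projOfInvol x * projOfInvol x = projOfInvol x := by
  have h : (1 + x) * (1 + x) = (2 : K) • (1 + x) := by
    rw [add_mul, mul_add, mul_add, hx, one_mul, mul_one, one_mul, two_smul]
    abel
  rw [projOfInvol, smul_mul_smul_comm, h, smul_smul, mul_assoc, one_div,
    inv_mul_cancel₀ two_ne_zero, mul_one]

theorem trace_projOfInvol (x : Matrix ι ι K) :
    (projOfInvol x).trace = (Fintype.card ι + x.trace) / 2 := by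
  simp only [projOfInvol, one_div, smul_add, Matrix.trace_add, Matrix.trace_smul,
    Matrix.trace_one, smul_eq_mul]
  ring

theorem trace_projOfInvol_mul (x y : Matrix ι ι K) :
    (projOfInvol x * projOfInvol y).trace
      = (Fintype.card ι + x.trace + y.trace + (x * y).trace) / 4 := by
  rw [projOfInvol, projOfInvol, smul_mul_smul_comm, one_div_mul_one_div, Matrix.trace_smul,
    add_mul, mul_add, mul_add, one_mul, mul_one, one_mul]
  simp only [Matrix.trace_add, Matrix.trace_one, smul_eq_mul]
  norm_num
  ring

end ProjOfInvol

section ChordalDistance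

variable {ι : Type*} [Fintype ι] [DecidableEq ι]

theorem dc2M_projOfInvol {x y : Matrix ι ι ℂ} (hx : x.trace = 0) (hy : y.trace = 0) :
    dc2M (projOfInvol x) (projOfInvol y) = (Fintype.card ι - (x * y).trace.re) / 4 := by
  rw [dc2M, trace_projOfInvol, trace_projOfInvol_mul, hx, hy]
  simp only [add_zero, Complex.sub_re, Complex.div_ofNat_re, Complex.natCast_re, Complex.add_re]
  ring

theorem dc2M_projOfInvol_eq_half_or_quarter {x y : Matrix ι ι ℂ} (hxx : x * x = 1)
    (hx : x.trace = 0) (hy : y.trace = 0) (hxy : (x * y).trace ≠ 0 → x * y = 1 ∨ x * y = -1)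
    (hne : x ≠ y) :
    dc2M (projOfInvol x) (projOfInvol y) = Fintype.card ι / 2 ∨
      dc2M (projOfInvol x) (projOfInvol y) = Fintype.card ι / 4 := by
  rw [dc2M_projOfInvol hx hy]
  by_cases h0 : (x * y).trace = 0
  · right
    simp [h0]
  · rcases hxy h0 with h | h
    · exact absurd (left_inv_eq_right_inv hxx h) hne
    · left
      rw [h, Matrix.trace_neg, Matrix.trace_one, Complex.neg_re, Complex.natCast_re]
      ring

end ChordalDistance

section SignedGroup

variable {n : ℕ} (G : Subgroup (Matrix.unitaryGroup (Fin n) ℂ))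

def signedGroup : Set (Matrix (Fin n) (Fin n) ℂ) :=
  {x | ∃ u ∈ G, ∃ ε : ℂ, (ε = 1 ∨ ε = -1) ∧ x = ε • (u : Matrix (Fin n) (Fin n) ℂ)}

def nontrivInvolutions : Set (Matrix (Fin n) (Fin n) ℂ) :=
  {g | (∃ u ∈ G, (u : Matrix (Fin n) (Fin n) ℂ) = g) ∧ g * g = 1 ∧ g ≠ 1 ∧ g ≠ -1}

def signedInvolutions : Set (Matrix (Fin n) (Fin n) ℂ) :=
  {x | ∃ g ∈ nontrivInvolutions G, ∃ ε : ℂ, (ε = 1 ∨ ε = -1) ∧ x = ε • g}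

def TracelessOffPmOne : Prop :=
  ∀ u ∈ G, ((u : Matrix (Fin n) (Fin n) ℂ)).trace ≠ 0 →
    (u : Matrix (Fin n) (Fin n) ℂ) = 1 ∨ (u : Matrix (Fin n) (Fin n) ℂ) = -1

variable {G}

theorem mul_mem_signedGroup {x y : Matrix (Fin n) (Fin n) ℂ} (hx : x ∈ signedGroup G)
    (hy : y ∈ signedGroup G) : x * y ∈ signedGroup G := by
  obtain ⟨u, hu, ε, hε, rfl⟩ := hx
  obtain ⟨v, hv, δ, hδ, rfl⟩ := hy
  refine ⟨u * v, mul_mem hu hv, ε * δ, ?_, by rw [smul_mul_smul_comm]; rfl⟩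
  rcases hε with rfl | rfl <;> rcases hδ with rfl | rfl <;> norm_num

theorem eq_one_or_eq_neg_one_of_trace_ne_zero
    (htrace : TracelessOffPmOne G)
    {x : Matrix (Fin n) (Fin n) ℂ} (hx : x ∈ signedGroup G) (h : x.trace ≠ 0) :
    x = 1 ∨ x = -1 := by
  obtain ⟨u, hu, ε, hε, rfl⟩ := hx
  rw [Matrix.trace_smul] at h
  rcases htrace u hu (right_ne_zero_of_smul h) with hu1 | hu1 <;>
    rcases hε with rfl | rfl <;> simp [hu1]

theorem signedInvolutions_subset_signedGroup : signedInvolutions G ⊆ signedGroup G := by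
  rintro _ ⟨g, ⟨⟨u, hu, rfl⟩, -⟩, ε, hε, rfl⟩
  exact ⟨u, hu, ε, hε, rfl⟩

theorem mul_self_of_mem_signedInvolutions {x : Matrix (Fin n) (Fin n) ℂ}
    (hx : x ∈ signedInvolutions G) : x * x = 1 := by
  obtain ⟨g, ⟨-, hg, -⟩, ε, hε, rfl⟩ := hx
  rcases hε with rfl | rfl <;> simp [hg]

theorem conjTranspose_of_mem_signedInvolutions {x : Matrix (Fin n) (Fin n) ℂ}
    (hx : x ∈ signedInvolutions G) : xᴴ = x := by
  obtain ⟨_, ⟨⟨u, -, rfl⟩, hu, -⟩, ε, hε, rfl⟩ := hx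
  have hstar : star (u : Matrix (Fin n) (Fin n) ℂ) = u :=
    left_inv_eq_right_inv (Matrix.UnitaryGroup.star_mul_self u) hu
  rcases hε with rfl | rfl <;> simp [← Matrix.star_eq_conjTranspose, hstar]

theorem ne_one_of_mem_signedInvolutions {x : Matrix (Fin n) (Fin n) ℂ}
    (hx : x ∈ signedInvolutions G) : x ≠ 1 ∧ x ≠ -1 := by
  obtain ⟨g, ⟨-, -, hg₁, hg₂⟩, ε, hε, rfl⟩ := hx
  rcases hε with rfl | rfl
  · simpa using ⟨hg₁, hg₂⟩
  · simp only [neg_one_smul, neg_eq_iff_eq_neg, ne_eq, neg_neg]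
    exact ⟨hg₂, hg₁⟩

theorem trace_eq_zero_of_mem_signedInvolutions
    (htrace : TracelessOffPmOne G)
    {x : Matrix (Fin n) (Fin n) ℂ} (hx : x ∈ signedInvolutions G) : x.trace = 0 := by
  obtain ⟨hx₁, hx₂⟩ := ne_one_of_mem_signedInvolutions hx
  by_contra h
  exact (eq_one_or_eq_neg_one_of_trace_ne_zero htrace
    (signedInvolutions_subset_signedGroup hx) h).elim hx₁ hx₂

theorem ne_neg_of_mem_nontrivInvolutions {g : Matrix (Fin n) (Fin n) ℂ}
    (hg : g ∈ nontrivInvolutions G) : g ≠ -g := by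
  obtain ⟨-, hgg, hg₁, -⟩ := hg
  intro h
  have h0 : g = 0 := by
    have h2 : (2 : ℂ) • g = 0 := by rw [two_smul]; exact eq_neg_iff_add_eq_zero.mp h
    exact (smul_eq_zero.mp h2).resolve_left two_ne_zero
  exact hg₁ (by rw [← hgg, h0, zero_mul])

theorem card_signedInvolutions :
    Nat.card (signedInvolutions G) =
      2 * Nat.card {s | ∃ g ∈ nontrivInvolutions G, s = fourGroup g} := by
  set 𝒮 := {s | ∃ g ∈ nontrivInvolutions G, s = fourGroup g}
  have h𝒮 : ∀ x ∈ signedInvolutions G, fourGroup x ∈ 𝒮 := by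
    rintro _ ⟨g, hg, ε, hε, rfl⟩
    refine ⟨g, hg, ?_⟩
    rcases hε with rfl | rfl
    · rw [one_smul]
    · rw [neg_one_smul, fourGroup_neg]
  rw [mul_comm]
  refine Nat.card_eq_mul_of_card_fiber_eq (fun x => ⟨fourGroup x.1, h𝒮 x.1 x.2⟩) two_ne_zero ?_
  rintro ⟨_, g, hg, rfl⟩
  have hg_mem : ∀ ε : ℂ, (ε = 1 ∨ ε = -1) → ε • g ∈ signedInvolutions G :=
    fun ε hε => ⟨g, hg, ε, hε, rfl⟩
  rw [Nat.card_eq_two_iff]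
  refine ⟨⟨⟨g, by simpa using hg_mem 1 (Or.inl rfl)⟩, rfl⟩,
    ⟨⟨-g, by simpa using hg_mem (-1) (Or.inr rfl)⟩, Subtype.ext (fourGroup_neg g)⟩, ?_, ?_⟩
  · simpa [Subtype.ext_iff] using ne_neg_of_mem_nontrivInvolutions hg
  · ext ⟨⟨x, hx⟩, hfib⟩
    obtain ⟨hx₁, hx₂⟩ := ne_one_of_mem_signedInvolutions hx
    have := (fourGroup_eq_fourGroup_iff hx₁ hx₂).1 (congrArg Subtype.val hfib)
    simpa [Subtype.ext_iff] using this

end SignedGroup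

theorem stmt15_general {n : ℕ} (G : Subgroup (Matrix.unitaryGroup (Fin n) ℂ))
    (htrace : ∀ u ∈ G, ((u : Matrix (Fin n) (Fin n) ℂ)).trace ≠ 0 →
      (u : Matrix (Fin n) (Fin n) ℂ) = 1 ∨ (u : Matrix (Fin n) (Fin n) ℂ) = -1) :
    let A : Set (Matrix (Fin n) (Fin n) ℂ) :=
      {g | (∃ u ∈ G, (u : Matrix (Fin n) (Fin n) ℂ) = g) ∧ g * g = 1 ∧ g ≠ 1 ∧ g ≠ -1}
    let 𝒮 : Set (Set (Matrix (Fin n) (Fin n) ℂ)) :=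
      {s | ∃ g ∈ A, s = {1, -1, g, -g}}
    let F : Set (Matrix (Fin n) (Fin n) ℂ) :=
      {p | ∃ g ∈ A, ∃ ε : ℂ, (ε = 1 ∨ ε = -1) ∧ p = (1 / 2 : ℂ) • (1 + ε • g)}
    (∀ p ∈ F, p.IsHermitian ∧ p * p = p ∧ p.trace = (n : ℂ) / 2) ∧
    Nat.card F = 2 * Nat.card 𝒮 ∧
    (∀ p ∈ F, ∀ q ∈ F, p ≠ q →
      dc2M p q = (n : ℝ) / 2 ∨ dc2M p q = (n : ℝ) / 4) := by
  intro A 𝒮 F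
  have hF : F = projOfInvol '' signedInvolutions G :=
    Set.ext fun _ => ⟨fun ⟨g, hg, ε, hε, hp⟩ => ⟨ε • g, ⟨g, hg, ε, hε, rfl⟩, hp.symm⟩,
      fun ⟨_, ⟨g, hg, ε, hε, rfl⟩, hp⟩ => ⟨g, hg, ε, hε, hp.symm⟩⟩
  refine ⟨?_, ?_, ?_⟩
  · rw [hF]
    rintro _ ⟨x, hx, rfl⟩
    refine ⟨isHermitian_projOfInvol (conjTranspose_of_mem_signedInvolutions hx),
      projOfInvol_mul_self (mul_self_of_mem_signedInvolutions hx), ?_⟩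
    rw [trace_projOfInvol, trace_eq_zero_of_mem_signedInvolutions htrace hx, Fintype.card_fin,
      add_zero]
  · rw [hF, Nat.card_image_of_injective projOfInvol_injective, card_signedInvolutions]
    rfl
  · rw [hF]
    rintro _ ⟨x, hx, rfl⟩ _ ⟨y, hy, rfl⟩ hne
    have hxy : x * y ∈ signedGroup G := mul_mem_signedGroup
      (signedInvolutions_subset_signedGroup hx) (signedInvolutions_subset_signedGroup hy)
    simpa only [Fintype.card_fin] using dc2M_projOfInvol_eq_half_or_quarter
      (mul_self_of_mem_signedInvolutions hx) (trace_eq_zero_of_mem_signedInvolutions htrace hx)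
      (trace_eq_zero_of_mem_signedInvolutions htrace hy)
      (eq_one_or_eq_neg_one_of_trace_ne_zero htrace hxy) (ne_of_apply_ne projOfInvol hne)

/-- for a finite subgroup `G ≤ Uₙ(ℂ)` in which only `±I` have nonzero
trace, the isotypic projections `(1/|S|)∑_{s∈S} χ(s)s` for `S = {I,−I,g,−g}` and `χ` a
linear character with `χ(−I) = −1` (concretely `(1/2)(I + εg)`, `ε = ±1`) are orthogonal
projections of rank `n/2`; the family of all of them has cardinality `2|𝒮|` and the only
squared chordal distances between distinct members are `m = n/2` and `m/2 = n/4`. -/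
theorem stmt15 {n : ℕ} (G : Subgroup (Matrix.unitaryGroup (Fin n) ℂ))
    (hfin : (G : Set (Matrix.unitaryGroup (Fin n) ℂ)).Finite)
    (htrace : ∀ u ∈ G, ((u : Matrix (Fin n) (Fin n) ℂ)).trace ≠ 0 →
      (u : Matrix (Fin n) (Fin n) ℂ) = 1 ∨ (u : Matrix (Fin n) (Fin n) ℂ) = -1) :
    let A : Set (Matrix (Fin n) (Fin n) ℂ) :=
      {g | (∃ u ∈ G, (u : Matrix (Fin n) (Fin n) ℂ) = g) ∧ g * g = 1 ∧ g ≠ 1 ∧ g ≠ -1}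
    let 𝒮 : Set (Set (Matrix (Fin n) (Fin n) ℂ)) :=
      {s | ∃ g ∈ A, s = {1, -1, g, -g}}
    let F : Set (Matrix (Fin n) (Fin n) ℂ) :=
      {p | ∃ g ∈ A, ∃ ε : ℂ, (ε = 1 ∨ ε = -1) ∧ p = (1 / 2 : ℂ) • (1 + ε • g)}
    (∀ p ∈ F, p.IsHermitian ∧ p * p = p ∧ p.trace = (n : ℂ) / 2) ∧
    Nat.card F = 2 * Nat.card 𝒮 ∧
    (∀ p ∈ F, ∀ q ∈ F, p ≠ q →
      dc2M p q = (n : ℝ) / 2 ∨ dc2M p q = (n : ℝ) / 4) :=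
  stmt15_general G htrace
end

section
/- In the setting of the previous construction (G ≤ Uₙ(ℂ) with all elements other than ±I traceless), if 2|𝒮| > n(n+1)/2 then the configuration of 2|𝒮| half-dimensional isotypic subspaces attains the orthoplex bound: its minimal squared chordal distance equals m(n−m)/n = n/4. -/
open scoped Matrix

/-!
For `p = ½(1 + εg)` and `q = ½(1 + δh)` with `g, h` traceless,
`d_c²(p, q) = n/4 - Re(εδ tr(gh))/4`. As `gh ∈ G`, its trace vanishes unless `gh = ±1`, i.e.
`h = ±g`; then `p ≠ q` forces `εδ tr(gh) = -n`, so every distance is at least `n/4`. Since an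
involution in `A` needs `n ≥ 2`, the hypothesis gives two distinct members `{±1, ±g}`, `{±1, ±h}`
of `𝒮`, and `½(1 + g)`, `½(1 + h)` are at distance exactly `n/4`.
-/

open Matrix

theorem one_lt_of_triangle_lt_two_mul {n k : ℕ} (hn : 2 ≤ n) (hk : n * (n + 1) / 2 < 2 * k) :
    1 < k := by
  have : 3 ≤ n * (n + 1) / 2 := (Nat.le_div_iff_mul_le two_pos).mpr (by nlinarith)
  omega

theorem sign_mul_eq_neg_one_of_ne {ε η : ℂ} (hε : ε = 1 ∨ ε = -1) (hη : η = 1 ∨ η = -1)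
    (hne : ε ≠ η) : ε * η = -1 := by
  rcases hε with rfl | rfl <;> rcases hη with rfl | rfl <;> norm_num at *

theorem eq_neg_of_mul_self_eq_one_of_mul_eq_neg_one {M : Type*} [Monoid M] [HasDistribNeg M]
    {a b : M} (ha : a * a = 1) (hab : a * b = -1) : b = -a :=
  neg_eq_iff_eq_neg.mp (left_inv_eq_right_inv ha (by rw [mul_neg, hab, neg_neg])).symm

theorem mul_ne_one_and_ne_neg_one {M : Type*} [Monoid M] [HasDistribNeg M] {a b : M}
    (ha : a * a = 1) (hba : b ≠ a) (hba' : b ≠ -a) : a * b ≠ 1 ∧ a * b ≠ -1 :=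
  ⟨fun h ↦ hba (left_inv_eq_right_inv ha h).symm,
    fun h ↦ hba' (eq_neg_of_mul_self_eq_one_of_mul_eq_neg_one ha h)⟩

section HalfProjections

variable {ι : Type*} [Fintype ι] [DecidableEq ι]

theorem two_le_card_of_mul_self_eq_one_of_trace_eq_zero {g : Matrix ι ι ℂ} (hgg : g * g = 1)
    (hg1 : g ≠ 1) (hg : g.trace = 0) : 2 ≤ Fintype.card ι := by
  by_contra! hcard
  have : Subsingleton ι := Fintype.card_le_one_iff_subsingleton.mp (by omega)
  cases isEmpty_or_nonempty ι with
  | inl _ => exact hg1 (Subsingleton.elim _ _)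
  | inr _ =>
    obtain ⟨i⟩ : Nonempty ι := ‹_›
    have hg0 : g = 0 := by
      ext a b
      rw [Subsingleton.elim a i, Subsingleton.elim b i, Matrix.zero_apply, ← hg, trace,
        Fintype.sum_subsingleton _ i, diag_apply]
    rw [hg0, zero_mul] at hgg
    exact zero_ne_one hgg

theorem dc2M_half_one_add_smul {g h : Matrix ι ι ℂ} (hg : g.trace = 0) (hh : h.trace = 0)
    (ε δ : ℂ) :
    dc2M ((1 / 2 : ℂ) • (1 + ε • g)) ((1 / 2 : ℂ) • (1 + δ • h)) =
      Fintype.card ι / 4 - (ε * δ * (g * h).trace).re / 4 := by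
  have htrace : ((1 / 2 : ℂ) • (1 + ε • g)).trace -
      ((1 / 2 : ℂ) • (1 + ε • g) * (1 / 2 : ℂ) • (1 + δ • h)).trace =
      (Fintype.card ι / 4 : ℝ) - ε * δ * (g * h).trace / 4 := by
    simp only [Matrix.smul_mul, Matrix.mul_smul, mul_add, add_mul, mul_one, one_mul, smul_add,
      smul_smul, trace_add, trace_smul, trace_one, hg, hh, smul_eq_mul]
    push_cast
    ring
  rw [dc2M, htrace]
  simp

theorem card_div_four_le_dc2M_half_one_add_smul {g h : Matrix ι ι ℂ} {ε δ : ℂ}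
    (hg : g.trace = 0) (hh : h.trace = 0) (hgg : g * g = 1)
    (hgh : (g * h).trace = 0 ∨ g * h = 1 ∨ g * h = -1)
    (hε : ε = 1 ∨ ε = -1) (hδ : δ = 1 ∨ δ = -1)
    (hne : (1 / 2 : ℂ) • (1 + ε • g) ≠ (1 / 2 : ℂ) • (1 + δ • h)) :
    (Fintype.card ι : ℝ) / 4 ≤ dc2M ((1 / 2 : ℂ) • (1 + ε • g)) ((1 / 2 : ℂ) • (1 + δ • h)) := by
  rw [dc2M_half_one_add_smul hg hh]
  suffices (ε * δ * (g * h).trace).re ≤ 0 by linarith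
  rcases hgh with hgh | hgh | hgh
  · simp [hgh]
  · obtain rfl : h = g := (left_inv_eq_right_inv hgg hgh).symm
    rw [sign_mul_eq_neg_one_of_ne hε hδ (by rintro rfl; exact hne rfl), hgh, trace_one]
    simp
  · obtain rfl : h = -g := eq_neg_of_mul_self_eq_one_of_mul_eq_neg_one hgg hgh
    have hδ' : -δ = 1 ∨ -δ = -1 := by rcases hδ with rfl | rfl <;> simp
    have hεδ : ε * -δ = -1 := sign_mul_eq_neg_one_of_ne hε hδ' (by
      rintro rfl
      exact hne (by rw [neg_smul, smul_neg]))
    rw [hgh, trace_neg, trace_one, mul_neg, ← neg_mul, ← mul_neg, hεδ]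
    simp

end HalfProjections

theorem stmt16_general {n : ℕ} (G : Subgroup (Matrix.unitaryGroup (Fin n) ℂ))
    (htrace : ∀ u ∈ G, ((u : Matrix (Fin n) (Fin n) ℂ)).trace ≠ 0 →
      (u : Matrix (Fin n) (Fin n) ℂ) = 1 ∨ (u : Matrix (Fin n) (Fin n) ℂ) = -1) :
    let A : Set (Matrix (Fin n) (Fin n) ℂ) :=
      {g | (∃ u ∈ G, (u : Matrix (Fin n) (Fin n) ℂ) = g) ∧ g * g = 1 ∧ g ≠ 1 ∧ g ≠ -1}
    let 𝒮 : Set (Set (Matrix (Fin n) (Fin n) ℂ)) :=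
      {s | ∃ g ∈ A, s = {1, -1, g, -g}}
    let F : Set (Matrix (Fin n) (Fin n) ℂ) :=
      {p | ∃ g ∈ A, ∃ ε : ℂ, (ε = 1 ∨ ε = -1) ∧ p = (1 / 2 : ℂ) • (1 + ε • g)}
    2 * Nat.card 𝒮 > n * (n + 1) / 2 →
      (∀ p ∈ F, ∀ q ∈ F, p ≠ q → (n : ℝ) / 4 ≤ dc2M p q) ∧
      (∃ p ∈ F, ∃ q ∈ F, p ≠ q ∧ dc2M p q = (n : ℝ) / 4) := by
  intro A 𝒮 F hcard
  have trace_mul : ∀ g ∈ A, ∀ h ∈ A, (g * h).trace = 0 ∨ g * h = 1 ∨ g * h = -1 := by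
    rintro _ ⟨⟨u, hu, rfl⟩, -⟩ _ ⟨⟨v, hv, rfl⟩, -⟩
    exact (eq_or_ne _ 0).imp_right (htrace (u * v) (mul_mem hu hv))
  have trace_eq_zero : ∀ g ∈ A, g.trace = 0 := by
    rintro _ ⟨⟨u, hu, rfl⟩, -, h1, hm1⟩
    by_contra ht
    exact (htrace u hu ht).elim h1 hm1
  constructor
  · rintro _ ⟨g, hg, ε, hε, rfl⟩ _ ⟨h, hh, δ, hδ, rfl⟩ hne
    simpa using card_div_four_le_dc2M_half_one_add_smul (trace_eq_zero g hg)
      (trace_eq_zero h hh) hg.2.1 (trace_mul g hg h hh) hε hδ hne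
  · obtain ⟨⟨⟨_, g₀, hg₀, rfl⟩⟩, _⟩ := Nat.card_pos_iff.mp (show 0 < Nat.card 𝒮 by omega)
    have hn : 2 ≤ n := by
      simpa using two_le_card_of_mul_self_eq_one_of_trace_eq_zero hg₀.2.1 hg₀.2.2.1
        (trace_eq_zero g₀ hg₀)
    obtain ⟨⟨_, g, hg, rfl⟩, ⟨_, h, hh, rfl⟩, hne⟩ :=
      (Finite.one_lt_card_iff_nontrivial.mp (one_lt_of_triangle_lt_two_mul hn hcard)).exists_pair_ne
    have hhg : h ≠ g := by rintro rfl; exact hne rfl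
    have hhg' : h ≠ -g := by rintro rfl; apply hne; simp [Set.insert_comm, Set.pair_comm]
    have hgh : (g * h).trace = 0 :=
      (trace_mul g hg h hh).resolve_right (not_or.mpr (mul_ne_one_and_ne_neg_one hg.2.1 hhg hhg'))
    refine ⟨_, ⟨g, hg, 1, Or.inl rfl, rfl⟩, _, ⟨h, hh, 1, Or.inl rfl, rfl⟩, ?_, ?_⟩
    · simpa using hhg.symm
    · rw [dc2M_half_one_add_smul (trace_eq_zero g hg) (trace_eq_zero h hh), hgh]
      simp

/-- in the setting of Statement 15, if `2|𝒮| > n(n+1)/2` then the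
configuration of the `2|𝒮|` half-dimensional isotypic subspaces attains the orthoplex
bound: its minimal squared chordal distance equals `m(n−m)/n = n/4`. -/
theorem stmt16 {n : ℕ} (G : Subgroup (Matrix.unitaryGroup (Fin n) ℂ))
    (hfin : (G : Set (Matrix.unitaryGroup (Fin n) ℂ)).Finite)
    (htrace : ∀ u ∈ G, ((u : Matrix (Fin n) (Fin n) ℂ)).trace ≠ 0 →
      (u : Matrix (Fin n) (Fin n) ℂ) = 1 ∨ (u : Matrix (Fin n) (Fin n) ℂ) = -1) :
    let A : Set (Matrix (Fin n) (Fin n) ℂ) :=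
      {g | (∃ u ∈ G, (u : Matrix (Fin n) (Fin n) ℂ) = g) ∧ g * g = 1 ∧ g ≠ 1 ∧ g ≠ -1}
    let 𝒮 : Set (Set (Matrix (Fin n) (Fin n) ℂ)) :=
      {s | ∃ g ∈ A, s = {1, -1, g, -g}}
    let F : Set (Matrix (Fin n) (Fin n) ℂ) :=
      {p | ∃ g ∈ A, ∃ ε : ℂ, (ε = 1 ∨ ε = -1) ∧ p = (1 / 2 : ℂ) • (1 + ε • g)}
    2 * Nat.card 𝒮 > n * (n + 1) / 2 →
      (∀ p ∈ F, ∀ q ∈ F, p ≠ q → (n : ℝ) / 4 ≤ dc2M p q) ∧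
      (∃ p ∈ F, ∃ q ∈ F, p ≠ q ∧ dc2M p q = (n : ℝ) / 4) :=
  stmt16_general G htrace
end
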